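/- Let G₁ and G₂ be finite simple graphs on finite vertex sets V₁ and V₂, each containing at least one cycle (neither G₁ nor G₂ is acyclic), let G be their disjoint union on V₁ ⊕ V₂, and let k be a field. Then: (a) for every t = (t₁, t₂) ∈ k^{E(G₁)} × k^{E(G₂)} ≅ k^{E(G)} with Ψ_G(t) ≠ 0 one has t₁ ≠ 0 and t₂ ≠ 0, so that the assignment [t] ↦ ([t₁], [t₂]) defines a map from ℙ(k^{E(G)}) ∖ X_G to (ℙ(k^{E(G₁)}) ∖ X_{G₁}) × (ℙ(k^{E(G₂)}) ∖ X_{G₂}); and (b) this map is surjective and each of its fibers is in bijection with the group of units kˣ = k ∖ {0}. -/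

import Mathlib

open scoped Classical
noncomputable section

open MvPolynomial

/-- A spanning forest of a simple graph `G`: a subset of the edge set that is maximal
among subsets of the edge set whose associated spanning subgraph is acyclic. -/
def SimpleGraph.IsSpanningForest {V : Type*} (G : SimpleGraph V) (T : Set (Sym2 V)) : Prop :=
  T ⊆ G.edgeSet ∧ (SimpleGraph.fromEdgeSet T).IsAcyclic ∧
    ∀ T' : Set (Sym2 V), T ⊆ T' → T' ⊆ G.edgeSet →
      (SimpleGraph.fromEdgeSet T').IsAcyclic → T' = T

/-- The Kirchhoff–Symanzik polynomial of a finite simple graph `G`: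
`Ψ_G = ∑_T ∏_{e ∉ T} x_e`, the sum over spanning forests `T` of `G`. -/
def SimpleGraph.kirchhoff {V : Type*} [Fintype V] (G : SimpleGraph V) :
    MvPolynomial G.edgeSet ℤ :=
  ∑ T ∈ Finset.univ.filter (fun T : Finset (Sym2 V) => G.IsSpanningForest ↑T),
    ∏ e ∈ Finset.univ.filter (fun e : G.edgeSet => (e : Sym2 V) ∉ T), X e

/-- The affine graph hypersurface `X̂_G ⊆ k^{E(G)}`. -/
def SimpleGraph.graphHypersurface {V : Type*} [Fintype V] (G : SimpleGraph V)
    (k : Type*) [CommRing k] : Set (G.edgeSet → k) :=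
  {t | (MvPolynomial.aeval t) G.kirchhoff = 0}

/-- The complement `k^{E(G)} ∖ X̂_G` of the affine graph hypersurface. -/
def SimpleGraph.graphHypersurfaceComplement {V : Type*} [Fintype V] (G : SimpleGraph V)
    (k : Type*) [CommRing k] : Set (G.edgeSet → k) :=
  {t | (MvPolynomial.aeval t) G.kirchhoff ≠ 0}

/-- The disjoint union of two simple graphs. -/
def SimpleGraph.disjUnion {V₁ V₂ : Type*} (G₁ : SimpleGraph V₁) (G₂ : SimpleGraph V₂) :
    SimpleGraph (V₁ ⊕ V₂) where
  Adj x y := (∃ a b, x = Sum.inl a ∧ y = Sum.inl b ∧ G₁.Adj a b) ∨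
             (∃ a b, x = Sum.inr a ∧ y = Sum.inr b ∧ G₂.Adj a b)
  symm := by
    constructor
    rintro x y (⟨a, b, rfl, rfl, h⟩ | ⟨a, b, rfl, rfl, h⟩)
    · exact Or.inl ⟨b, a, rfl, rfl, h.symm⟩
    · exact Or.inr ⟨b, a, rfl, rfl, h.symm⟩
  loopless := by
    constructor
    rintro x (⟨a, b, rfl, hab, h⟩ | ⟨a, b, rfl, hab, h⟩) <;>
      · cases hab
        exact (h.ne rfl).elim

lemma SimpleGraph.disjUnion_mem_inl {V₁ V₂ : Type*} {G₁ : SimpleGraph V₁}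
    {G₂ : SimpleGraph V₂} {e : Sym2 V₁} (he : e ∈ G₁.edgeSet) :
    e.map Sum.inl ∈ (G₁.disjUnion G₂).edgeSet := by
  induction e using Sym2.ind with
  | _ a b => exact Or.inl ⟨a, b, rfl, rfl, he⟩

lemma SimpleGraph.disjUnion_mem_inr {V₁ V₂ : Type*} {G₁ : SimpleGraph V₁}
    {G₂ : SimpleGraph V₂} {e : Sym2 V₂} (he : e ∈ G₂.edgeSet) :
    e.map Sum.inr ∈ (G₁.disjUnion G₂).edgeSet := by
  induction e using Sym2.ind with
  | _ a b => exact Or.inr ⟨a, b, rfl, rfl, he⟩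

/-- The canonical inclusion `E(G₁) ↪ E(G₁ ⊔ G₂)`. -/
def SimpleGraph.disjUnionEdgeInl {V₁ V₂ : Type*} (G₁ : SimpleGraph V₁) (G₂ : SimpleGraph V₂) :
    G₁.edgeSet → (G₁.disjUnion G₂).edgeSet :=
  fun e => ⟨(e : Sym2 V₁).map Sum.inl, SimpleGraph.disjUnion_mem_inl e.2⟩

/-- The canonical inclusion `E(G₂) ↪ E(G₁ ⊔ G₂)`. -/
def SimpleGraph.disjUnionEdgeInr {V₁ V₂ : Type*} (G₁ : SimpleGraph V₁) (G₂ : SimpleGraph V₂) :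
    G₂.edgeSet → (G₁.disjUnion G₂).edgeSet :=
  fun e => ⟨(e : Sym2 V₂).map Sum.inr, SimpleGraph.disjUnion_mem_inr e.2⟩

/-- The complement of the projective graph hypersurface `X_G` in `ℙ(k^{E(G)})`:
since `Ψ_G` is homogeneous, a point lies off `X_G` iff `Ψ_G` is nonzero on a
(equivalently, any) nonzero representative. -/
def SimpleGraph.projHypersurfaceComplement {V : Type*} [Fintype V] (G : SimpleGraph V)
    (k : Type*) [Field k] : Set (Projectivization k (G.edgeSet → k)) :=
  {p | (MvPolynomial.aeval p.rep) G.kirchhoff ≠ 0}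

/-!
A spanning forest of `G₁ ⊔ G₂` is the same thing as a spanning forest of `G₁` placed next to one
of `G₂`, so `Ψ_{G₁ ⊔ G₂}(t) = Ψ_{G₁}(t₁) Ψ_{G₂}(t₂)`. A graph with a cycle has no spanning forest
containing all its edges, so `Ψ_{Gᵢ}(0) = 0`; hence `t₁, t₂ ≠ 0` whenever `Ψ_G(t) ≠ 0`.
Counting connected components while deleting bridges shows that every spanning forest has
`|V| - c(G)` edges, so `Ψ_G` is homogeneous and membership in `ℙ ∖ X_G` does not depend on the
representative. Over a point `([a], [b])` the fibre consists of the points `[(a, c b)]`,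
`c ∈ kˣ`, and they are pairwise distinct because `a ≠ 0` forces the rescaling relating two
of them to be trivial.
-/

theorem MvPolynomial.IsHomogeneous.aeval_smul {σ R S : Type*} [CommSemiring R] [CommSemiring S]
    [Algebra R S] {φ : MvPolynomial σ R} {n : ℕ} (hφ : φ.IsHomogeneous n) (c : S) (x : σ → S) :
    MvPolynomial.aeval (c • x) φ = c ^ n * MvPolynomial.aeval x φ := by
  simp only [MvPolynomial.aeval_def, eval₂_eq, Finset.mul_sum]
  refine Finset.sum_congr rfl fun d hd ↦ ?_
  have hdeg : ∑ i ∈ d.support, d i = n := by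
    simpa [Finsupp.weight_apply, Finsupp.sum] using hφ (mem_support_iff.1 hd)
  simp only [Pi.smul_apply, smul_eq_mul, mul_pow, Finset.prod_mul_distrib,
    Finset.prod_pow_eq_pow_sum, hdeg]
  ring

theorem maximal_prodMk_iff {α β : Type*} [Preorder α] [Preorder β] {P : α → Prop} {Q : β → Prop}
    {a : α} {b : β} :
    Maximal (fun x : α × β ↦ P x.1 ∧ Q x.2) (a, b) ↔ Maximal P a ∧ Maximal Q b := by
  refine ⟨fun h ↦ ⟨⟨h.prop.1, fun y hy hay ↦ ?_⟩, ⟨h.prop.2, fun y hy hby ↦ ?_⟩⟩,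
    fun ⟨ha, hb⟩ ↦ ⟨⟨ha.prop, hb.prop⟩, fun y hy hle ↦ ⟨ha.2 hy.1 hle.1, hb.2 hy.2 hle.2⟩⟩⟩
  · exact (h.2 (y := (y, b)) ⟨hy, h.prop.2⟩ ⟨hay, le_rfl⟩).1
  · exact (h.2 (y := (a, y)) ⟨h.prop.1, hy⟩ ⟨le_rfl, hby⟩).2

theorem Projectivization.mk_eq_iff {K W : Type*} [DivisionRing K] [AddCommGroup W] [Module K W]
    {v : W} (hv : v ≠ 0) {p : Projectivization K W} : mk K v hv = p ↔ ∃ u : Kˣ, u • p.rep = v := by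
  conv_lhs => rw [← p.mk_rep]
  exact mk_eq_mk_iff K v p.rep hv p.rep_nonzero

namespace SimpleGraph

section Forest
variable {V : Type*} {G : SimpleGraph V}

lemma Reachable.apply_eq_of_forall_adj {β : Sort*} {f : V → β} (hf : ∀ ⦃x y⦄, G.Adj x y → f x = f y)
    {x y : V} (h : G.Reachable x y) : f x = f y := by
  obtain ⟨p⟩ := h
  induction p with
  | nil => rfl
  | cons hadj _ ih => exact (hf hadj).trans ih

theorem IsBridge.card_connectedComponent_deleteEdges [Finite V] {a b : V}
    (h : G.IsBridge s(a, b)) (hadj : G.Adj a b) :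
    Nat.card (G.deleteEdges {s(a, b)}).ConnectedComponent = Nat.card G.ConnectedComponent + 1 := by
  set H := G.deleteEdges {s(a, b)}
  have hab : ¬H.Reachable a b := isBridge_iff.1 h
  -- Sending the `H`-component of `b` to that of `a` identifies exactly the two components that
  -- the edge `s(a, b)` joins, so `f` descends to a bijection from the `G`-components.
  let f : V → H.ConnectedComponent := fun x ↦
    if H.Reachable x b then H.connectedComponentMk a else H.connectedComponentMk x
  have hf_ne (x : V) : f x ≠ H.connectedComponentMk b := by
    by_cases hx : H.Reachable x b <;> simp [f, hx, ConnectedComponent.eq, hab]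
  have hf_adj : ∀ ⦃x y⦄, G.Adj x y → f x = f y := by
    intro x y hxy
    by_cases he : s(x, y) = s(a, b)
    · rcases Sym2.eq_iff.1 he with ⟨rfl, rfl⟩ | ⟨rfl, rfl⟩ <;> simp [f]
    · have hxy' : H.Reachable x y := (deleteEdges_adj.2 ⟨hxy, he⟩).reachable
      have : H.Reachable x b ↔ H.Reachable y b := ⟨hxy'.symm.trans, hxy'.trans⟩
      simp only [f, this, ConnectedComponent.eq.2 hxy']
  let e : G.ConnectedComponent ≃ {c : H.ConnectedComponent // c ≠ H.connectedComponentMk b} :=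
    { toFun := ConnectedComponent.lift (fun x ↦ ⟨f x, hf_ne x⟩)
        fun _ _ p _ ↦ Subtype.ext (Reachable.apply_eq_of_forall_adj hf_adj ⟨p⟩)
      invFun := fun c ↦ c.1.map (Hom.ofLE (deleteEdges_le _))
      left_inv := by
        refine ConnectedComponent.ind fun x ↦ ?_
        change (f x).map (Hom.ofLE (deleteEdges_le _)) = G.connectedComponentMk x
        by_cases hx : H.Reachable x b
        · simp only [f, if_pos hx]
          exact ConnectedComponent.eq.2 (hadj.reachable.trans (hx.symm.mono (deleteEdges_le _)))
        · simp only [f, if_neg hx]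
          rfl
      right_inv := by
        rintro ⟨c, hc⟩
        induction c using ConnectedComponent.ind with | _ x =>
        exact Subtype.ext (if_neg fun h ↦ hc (ConnectedComponent.eq.2 h)) }
  rw [← Nat.card_congr (Equiv.optionSubtypeNe (H.connectedComponentMk b)), Finite.card_option,
    Nat.card_congr e]

theorem IsAcyclic.ncard_edgeSet_add_card_connectedComponent [Finite V] (hG : G.IsAcyclic) :
    G.edgeSet.ncard + Nat.card G.ConnectedComponent = Nat.card V := by
  induction hn : G.edgeSet.ncard generalizing G with
  | zero =>
    obtain rfl : G = ⊥ := edgeSet_eq_empty.1 ((Set.ncard_eq_zero).1 hn)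
    refine (zero_add _).trans
      (Nat.card_eq_of_bijective (⊥ : SimpleGraph V).connectedComponentMk ⟨fun x y h ↦ ?_, ?_⟩).symm
    · exact reachable_bot.1 (ConnectedComponent.eq.1 h)
    · exact ConnectedComponent.ind fun x ↦ ⟨x, rfl⟩
  | succ n ih =>
    obtain ⟨e, he⟩ := Set.nonempty_of_ncard_ne_zero (s := G.edgeSet) (by omega)
    induction e using Sym2.ind with | _ a b =>
    have hcard : (G.deleteEdges {s(a, b)}).edgeSet.ncard = n := by
      rw [edgeSet_deleteEdges, Set.ncard_sdiff_singleton_of_mem he, hn, Nat.add_sub_cancel]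
    have := ih (hG.anti (deleteEdges_le _)) hcard
    rw [(isAcyclic_iff_forall_isBridge.1 hG he).card_connectedComponent_deleteEdges he] at this
    omega

lemma edgeSet_fromEdgeSet_of_subset {T : Set (Sym2 V)} (hT : T ⊆ G.edgeSet) :
    (fromEdgeSet T).edgeSet = T := by
  rw [edgeSet_fromEdgeSet, sdiff_eq_left]
  exact Set.disjoint_left.2 fun e he ↦ G.not_isDiag_of_mem_edgeSet (hT he)

theorem isSpanningForest_iff_maximal {T : Set (Sym2 V)} :
    G.IsSpanningForest T ↔ Maximal (fun S ↦ S ⊆ G.edgeSet ∧ (fromEdgeSet S).IsAcyclic) T :=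
  ⟨fun ⟨hT, hacyc, hmax⟩ ↦ ⟨⟨hT, hacyc⟩, fun S ⟨hS, hS'⟩ hTS ↦ (hmax S hTS hS hS').le⟩,
    fun h ↦ ⟨h.prop.1, h.prop.2, fun _ hTS hS hS' ↦ (h.le_of_ge ⟨hS, hS'⟩ hTS).antisymm hTS⟩⟩

lemma IsSpanningForest.maximal_fromEdgeSet {T : Set (Sym2 V)} (hT : G.IsSpanningForest T) :
    Maximal (fun H ↦ H ≤ G ∧ H.IsAcyclic) (fromEdgeSet T) := by
  obtain ⟨hTG, hacyc, hmax⟩ := hT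
  refine ⟨⟨fromEdgeSet_edgeSet G ▸ fromEdgeSet_mono hTG, hacyc⟩, fun H ⟨hHG, hH⟩ hTH ↦ ?_⟩
  have hTH' : T ⊆ H.edgeSet := by
    simpa [edgeSet_fromEdgeSet_of_subset hTG] using edgeSet_mono hTH
  rw [← hmax H.edgeSet hTH' (edgeSet_mono hHG) (by rwa [fromEdgeSet_edgeSet]), fromEdgeSet_edgeSet]

theorem IsSpanningForest.ncard_add_card_connectedComponent [Finite V] {T : Set (Sym2 V)}
    (hT : G.IsSpanningForest T) : T.ncard + Nat.card G.ConnectedComponent = Nat.card V := by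
  have hreach := reachable_eq_of_maximal_isAcyclic _ hT.maximal_fromEdgeSet
  have hcc : Nat.card (fromEdgeSet T).ConnectedComponent = Nat.card G.ConnectedComponent :=
    Nat.card_congr (Quot.congrRight fun _ _ ↦ by rw [hreach])
  have := hT.2.1.ncard_edgeSet_add_card_connectedComponent
  rwa [edgeSet_fromEdgeSet_of_subset hT.1, hcc] at this

end Forest

section Kirchhoff
variable {V : Type*} [Fintype V] {G : SimpleGraph V}

theorem kirchhoff_isHomogeneous :
    G.kirchhoff.IsHomogeneous
      (Nat.card G.edgeSet + Nat.card G.ConnectedComponent - Nat.card V) := by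
  refine IsHomogeneous.sum _ _ _ fun T hT ↦ ?_
  have hT := (Finset.mem_filter.1 hT).2
  convert IsHomogeneous.prod _ _ _ fun e _ ↦ isHomogeneous_X ℤ e
  have hin : (Finset.univ.filter fun e : G.edgeSet ↦ (e : Sym2 V) ∈ T).card = T.card :=
    Finset.card_nbij Subtype.val (fun e he ↦ by simpa using he) Subtype.val_injective.injOn
      fun e he ↦ ⟨⟨e, hT.1 he⟩, by simpa using he, rfl⟩
  have hsplit := Finset.card_filter_add_card_filter_not (s := Finset.univ)
    (fun e : G.edgeSet ↦ (e : Sym2 V) ∈ T)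
  have hforest := hT.ncard_add_card_connectedComponent
  rw [Finset.card_univ, ← Nat.card_eq_fintype_card] at hsplit
  rw [Set.ncard_coe_finset] at hforest
  rw [Finset.sum_const, smul_eq_mul, mul_one]
  omega

theorem aeval_zero_kirchhoff {R : Type*} [CommRing R] (hG : ¬G.IsAcyclic) :
    aeval (0 : G.edgeSet → R) G.kirchhoff = 0 := by
  simp only [kirchhoff, map_sum, map_prod, aeval_X]
  refine Finset.sum_eq_zero fun T hT ↦ ?_
  have hT := (Finset.mem_filter.1 hT).2
  obtain ⟨e, he, heT⟩ : ∃ e ∈ G.edgeSet, e ∉ T := by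
    by_contra! hsub
    exact hG (by simpa [Set.Subset.antisymm hT.1 hsub] using hT.2.1)
  exact Finset.prod_eq_zero (i := ⟨e, he⟩) (by simp [heT]) rfl

end Kirchhoff

section Sum
variable {V W : Type*} {G : SimpleGraph V} {H : SimpleGraph W}

lemma reachable_sum_inl_iff {a a' : V} :
    (G ⊕g H).Reachable (.inl a) (.inl a') ↔ G.Reachable a a' := by
  refine ⟨fun h ↦ ?_, fun h ↦ h.map Embedding.sumInl.toHom⟩
  rw [reachable_iff_reflTransGen] at h ⊢
  refine h.lift' (Sum.elim id fun _ ↦ a) ?_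
  rintro (x | x) (y | y) hxy <;>
    simp_all [Function.onFun, Relation.ReflTransGen.single, Relation.ReflTransGen.refl]

lemma reachable_sum_inr_iff {b b' : W} :
    (G ⊕g H).Reachable (.inr b) (.inr b') ↔ H.Reachable b b' := by
  refine ⟨fun h ↦ ?_, fun h ↦ h.map Embedding.sumInr.toHom⟩
  rw [reachable_iff_reflTransGen] at h ⊢
  refine h.lift' (Sum.elim (fun _ ↦ b) id) ?_
  rintro (x | x) (y | y) hxy <;>
    simp_all [Function.onFun, Relation.ReflTransGen.single, Relation.ReflTransGen.refl]

lemma deleteEdges_sum_inl {a a' : V} :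
    (G ⊕g H).deleteEdges {s(.inl a, .inl a')} = G.deleteEdges {s(a, a')} ⊕g H := by
  ext (x | x) (y | y) <;> simp

lemma deleteEdges_sum_inr {b b' : W} :
    (G ⊕g H).deleteEdges {s(.inr b, .inr b')} = G ⊕g H.deleteEdges {s(b, b')} := by
  ext (x | x) (y | y) <;> simp

theorem isAcyclic_sum_iff : (G ⊕g H).IsAcyclic ↔ G.IsAcyclic ∧ H.IsAcyclic := by
  refine ⟨fun h ↦ ⟨h.embedding Embedding.sumInl, h.embedding Embedding.sumInr⟩,
    fun ⟨hG, hH⟩ ↦ isAcyclic_iff_forall_adj_isBridge.2 ?_⟩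
  rintro (a | b) (a' | b') hadj
  · rw [isBridge_iff, deleteEdges_sum_inl, reachable_sum_inl_iff]
    exact isAcyclic_iff_forall_adj_isBridge.1 hG (sum_adj_inl.1 hadj)
  · simp at hadj
  · simp at hadj
  · rw [isBridge_iff, deleteEdges_sum_inr, reachable_sum_inr_iff]
    exact isAcyclic_iff_forall_adj_isBridge.1 hH (sum_adj_inr.1 hadj)

end Sum

section DisjUnion
variable {V₁ V₂ : Type*}

def sumEdges (S₁ : Set (Sym2 V₁)) (S₂ : Set (Sym2 V₂)) : Set (Sym2 (V₁ ⊕ V₂)) :=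
  Sym2.map Sum.inl '' S₁ ∪ Sym2.map Sum.inr '' S₂

variable {S₁ T₁ : Set (Sym2 V₁)} {S₂ T₂ : Set (Sym2 V₂)}

@[simp] lemma mk_mem_sumEdges {x y : V₁ ⊕ V₂} :
    s(x, y) ∈ sumEdges S₁ S₂ ↔
      Sum.LiftRel (fun a b ↦ s(a, b) ∈ S₁) (fun a b ↦ s(a, b) ∈ S₂) x y := by
  simp only [sumEdges, Set.mem_union, Set.mem_image, Sym2.exists, Sym2.map_mk, Sym2.eq_iff]
  rcases x with a | a <;> rcases y with b | b <;> grind [Sym2.eq_swap]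

@[simp] lemma preimage_inl_sumEdges : Sym2.map Sum.inl ⁻¹' sumEdges S₁ S₂ = S₁ := by
  ext e
  induction e using Sym2.ind
  simp

@[simp] lemma preimage_inr_sumEdges : Sym2.map Sum.inr ⁻¹' sumEdges S₁ S₂ = S₂ := by
  ext e
  induction e using Sym2.ind
  simp

lemma sumEdges_subset_sumEdges_iff : sumEdges S₁ S₂ ⊆ sumEdges T₁ T₂ ↔ S₁ ⊆ T₁ ∧ S₂ ⊆ T₂ := by
  refine ⟨fun h ↦ ⟨?_, ?_⟩, fun ⟨h₁, h₂⟩ ↦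
    Set.union_subset_union (Set.image_mono h₁) (Set.image_mono h₂)⟩
  · simpa using Set.preimage_mono (f := Sym2.map Sum.inl) h
  · simpa using Set.preimage_mono (f := Sym2.map Sum.inr) h

lemma eq_sumEdges_preimage {S : Set (Sym2 (V₁ ⊕ V₂))} (h : S ⊆ sumEdges T₁ T₂) :
    S = sumEdges (Sym2.map Sum.inl ⁻¹' S) (Sym2.map Sum.inr ⁻¹' S) := by
  refine subset_antisymm (fun e he ↦ ?_)
    (Set.union_subset (Set.image_preimage_subset _ _) (Set.image_preimage_subset _ _))
  induction e using Sym2.ind with | _ x y =>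
  have := h he
  rcases x with a | a <;> rcases y with b | b <;> simp_all

lemma fromEdgeSet_sumEdges :
    fromEdgeSet (sumEdges S₁ S₂) = fromEdgeSet S₁ ⊕g fromEdgeSet S₂ := by
  ext (a | a) (b | b) <;> simp

lemma edgeSet_disjUnion (G₁ : SimpleGraph V₁) (G₂ : SimpleGraph V₂) :
    (G₁.disjUnion G₂).edgeSet = sumEdges G₁.edgeSet G₂.edgeSet := by
  ext e
  induction e using Sym2.ind with | _ x y =>
  rcases x with a | a <;> rcases y with b | b <;> simp [disjUnion]

lemma disjUnion_eq_sum (G₁ : SimpleGraph V₁) (G₂ : SimpleGraph V₂) :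
    G₁.disjUnion G₂ = G₁ ⊕g G₂ := by
  ext (a | a) (b | b) <;> simp [disjUnion]

def sumEdgesEmbedding : Set (Sym2 V₁) × Set (Sym2 V₂) ↪o Set (Sym2 (V₁ ⊕ V₂)) :=
  OrderEmbedding.ofMapLEIff (fun S ↦ sumEdges S.1 S.2) fun _ _ ↦ sumEdges_subset_sumEdges_iff

@[simp] lemma sumEdgesEmbedding_apply (S : Set (Sym2 V₁) × Set (Sym2 V₂)) :
    sumEdgesEmbedding S = sumEdges S.1 S.2 := rfl

variable {G₁ : SimpleGraph V₁} {G₂ : SimpleGraph V₂}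

theorem isSpanningForest_disjUnion_iff :
    (G₁.disjUnion G₂).IsSpanningForest (sumEdges T₁ T₂) ↔
      G₁.IsSpanningForest T₁ ∧ G₂.IsSpanningForest T₂ := by
  have key : ∀ S₁ S₂, (sumEdges S₁ S₂ ⊆ (G₁.disjUnion G₂).edgeSet ∧
      (fromEdgeSet (sumEdges S₁ S₂)).IsAcyclic) ↔
        (S₁ ⊆ G₁.edgeSet ∧ (fromEdgeSet S₁).IsAcyclic) ∧
          (S₂ ⊆ G₂.edgeSet ∧ (fromEdgeSet S₂).IsAcyclic) := by
    intro S₁ S₂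
    rw [edgeSet_disjUnion, sumEdges_subset_sumEdges_iff, fromEdgeSet_sumEdges, isAcyclic_sum_iff]
    tauto
  have hrange : {S | S ⊆ (G₁.disjUnion G₂).edgeSet ∧ (fromEdgeSet S).IsAcyclic} ⊆
      Set.range sumEdgesEmbedding := by
    rintro S ⟨hS, -⟩
    rw [edgeSet_disjUnion] at hS
    exact ⟨(_, _), (eq_sumEdges_preimage hS).symm⟩
  simp only [isSpanningForest_iff_maximal, ← maximal_prodMk_iff]
  simpa [key] using sumEdgesEmbedding.maximal_apply_mem_iff (x := (T₁, T₂)) hrange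

variable (G₁ G₂) in
def edgeSetDisjUnionEquiv : (G₁.disjUnion G₂).edgeSet ≃ G₁.edgeSet ⊕ G₂.edgeSet :=
  (Equiv.setCongr (by rw [disjUnion_eq_sum])).trans edgeSetSumEquiv

@[simp] lemma edgeSetDisjUnionEquiv_symm_inl (e : G₁.edgeSet) :
    (edgeSetDisjUnionEquiv G₁ G₂).symm (.inl e) = G₁.disjUnionEdgeInl G₂ e := by
  obtain ⟨e, he⟩ := e
  induction e using Sym2.ind
  rfl

@[simp] lemma edgeSetDisjUnionEquiv_symm_inr (e : G₂.edgeSet) :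
    (edgeSetDisjUnionEquiv G₁ G₂).symm (.inr e) = G₁.disjUnionEdgeInr G₂ e := by
  obtain ⟨e, he⟩ := e
  induction e using Sym2.ind
  rfl

@[simp] lemma edgeSetDisjUnionEquiv_inl (e : G₁.edgeSet) :
    edgeSetDisjUnionEquiv G₁ G₂ (G₁.disjUnionEdgeInl G₂ e) = .inl e :=
  (Equiv.eq_symm_apply _).1 (edgeSetDisjUnionEquiv_symm_inl e).symm

@[simp] lemma edgeSetDisjUnionEquiv_inr (e : G₂.edgeSet) :
    edgeSetDisjUnionEquiv G₁ G₂ (G₁.disjUnionEdgeInr G₂ e) = .inr e :=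
  (Equiv.eq_symm_apply _).1 (edgeSetDisjUnionEquiv_symm_inr e).symm

@[simp] lemma coe_disjUnionEdgeInl (e : G₁.edgeSet) :
    (G₁.disjUnionEdgeInl G₂ e : Sym2 (V₁ ⊕ V₂)) = Sym2.map Sum.inl e := rfl

@[simp] lemma coe_disjUnionEdgeInr (e : G₂.edgeSet) :
    (G₁.disjUnionEdgeInr G₂ e : Sym2 (V₁ ⊕ V₂)) = Sym2.map Sum.inr e := rfl

theorem aeval_kirchhoff_disjUnion [Fintype V₁] [Fintype V₂] {R : Type*} [CommRing R]
    (t : (G₁.disjUnion G₂).edgeSet → R) :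
    aeval t (G₁.disjUnion G₂).kirchhoff =
      aeval (t ∘ G₁.disjUnionEdgeInl G₂) G₁.kirchhoff *
        aeval (t ∘ G₁.disjUnionEdgeInr G₂) G₂.kirchhoff := by
  have hdecomp {T : Finset (Sym2 (V₁ ⊕ V₂))} (hT : (G₁.disjUnion G₂).IsSpanningForest T) :
      (T : Set (Sym2 (V₁ ⊕ V₂))) = sumEdges (Sym2.map Sum.inl ⁻¹' (T : Set (Sym2 (V₁ ⊕ V₂))))
        (Sym2.map Sum.inr ⁻¹' (T : Set (Sym2 (V₁ ⊕ V₂)))) :=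
    eq_sumEdges_preimage (edgeSet_disjUnion G₁ G₂ ▸ hT.1)
  have hcoe (P : Finset (Sym2 V₁) × Finset (Sym2 V₂)) :
      ((P.1.map Function.Embedding.inl.sym2Map ∪ P.2.map Function.Embedding.inr.sym2Map :
        Finset (Sym2 (V₁ ⊕ V₂))) : Set (Sym2 (V₁ ⊕ V₂))) = sumEdges P.1 P.2 := by
    simp [sumEdges]
  simp only [kirchhoff, map_sum, map_prod, aeval_X, Finset.sum_mul_sum, ← Finset.sum_product']
  refine Finset.sum_nbij'
    (fun T ↦ (T.preimage _ (Sym2.map.injective Sum.inl_injective).injOn,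
      T.preimage _ (Sym2.map.injective Sum.inr_injective).injOn))
    (fun P ↦ P.1.map Function.Embedding.inl.sym2Map ∪ P.2.map Function.Embedding.inr.sym2Map)
    (fun T hT ↦ ?_) (fun P hP ↦ ?_) (fun T hT ↦ ?_) (fun P _ ↦ ?_) (fun T _ ↦ ?_)
  · simp only [Finset.mem_filter, Finset.mem_univ, true_and, Finset.mem_product] at hT ⊢
    simpa [Finset.coe_preimage] using isSpanningForest_disjUnion_iff.1 (hdecomp hT ▸ hT)
  · simp only [Finset.mem_filter, Finset.mem_univ, true_and, Finset.mem_product] at hP ⊢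
    exact hcoe P ▸ isSpanningForest_disjUnion_iff.2 hP
  · simp only [Finset.mem_filter, Finset.mem_univ, true_and] at hT
    refine Finset.coe_injective ?_
    rw [hcoe, Finset.coe_preimage, Finset.coe_preimage, ← hdecomp hT]
  · ext : 1 <;> refine Finset.coe_injective ?_ <;>
      simp only [Finset.coe_preimage, hcoe, preimage_inl_sumEdges, preimage_inr_sumEdges]
  · rw [Finset.prod_filter, Finset.prod_filter, Finset.prod_filter,
      ← (edgeSetDisjUnionEquiv G₁ G₂).symm.prod_comp, Fintype.prod_sum_type]
    simp

end DisjUnion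

section Projective
variable {V₁ V₂ : Type*} {G₁ : SimpleGraph V₁} {G₂ : SimpleGraph V₂} {R : Type*}

def disjUnionEdgeElim (a : G₁.edgeSet → R) (b : G₂.edgeSet → R) :
    (G₁.disjUnion G₂).edgeSet → R :=
  Sum.elim a b ∘ edgeSetDisjUnionEquiv G₁ G₂

@[simp] lemma disjUnionEdgeElim_comp_inl (a : G₁.edgeSet → R) (b : G₂.edgeSet → R) :
    disjUnionEdgeElim a b ∘ G₁.disjUnionEdgeInl G₂ = a := by
  funext e
  simp [disjUnionEdgeElim]

@[simp] lemma disjUnionEdgeElim_comp_inr (a : G₁.edgeSet → R) (b : G₂.edgeSet → R) :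
    disjUnionEdgeElim a b ∘ G₁.disjUnionEdgeInr G₂ = b := by
  funext e
  simp [disjUnionEdgeElim]

lemma disjUnionEdgeElim_comp_inl_comp_inr (t : (G₁.disjUnion G₂).edgeSet → R) :
    disjUnionEdgeElim (t ∘ G₁.disjUnionEdgeInl G₂) (t ∘ G₁.disjUnionEdgeInr G₂) = t := by
  funext e
  obtain ⟨x | x, rfl⟩ := (edgeSetDisjUnionEquiv G₁ G₂).symm.surjective e <;>
    simp [disjUnionEdgeElim]

lemma smul_disjUnionEdgeElim {M : Type*} [SMul M R] (c : M) (a : G₁.edgeSet → R)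
    (b : G₂.edgeSet → R) : c • disjUnionEdgeElim a b = disjUnionEdgeElim (c • a) (c • b) := by
  funext e
  simp only [disjUnionEdgeElim, Pi.smul_apply, Function.comp_apply]
  cases edgeSetDisjUnionEquiv G₁ G₂ e <;> rfl

lemma disjUnionEdgeElim_ne_zero [Zero R] {a : G₁.edgeSet → R} (ha : a ≠ 0)
    (b : G₂.edgeSet → R) : disjUnionEdgeElim a b ≠ 0 := fun h ↦
  ha (by rw [← disjUnionEdgeElim_comp_inl a b, h, Pi.zero_comp])

variable [Fintype V₁] [Fintype V₂]

theorem aeval_disjUnionEdgeElim [CommRing R] (a : G₁.edgeSet → R) (b : G₂.edgeSet → R) :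
    aeval (disjUnionEdgeElim a b) (G₁.disjUnion G₂).kirchhoff =
      aeval a G₁.kirchhoff * aeval b G₂.kirchhoff := by
  rw [aeval_kirchhoff_disjUnion, disjUnionEdgeElim_comp_inl, disjUnionEdgeElim_comp_inr]

theorem comp_disjUnionEdgeInl_ne_zero [CommRing R] (h₁ : ¬G₁.IsAcyclic)
    {t : (G₁.disjUnion G₂).edgeSet → R} (ht : aeval t (G₁.disjUnion G₂).kirchhoff ≠ 0) :
    t ∘ G₁.disjUnionEdgeInl G₂ ≠ 0 := by
  intro h
  rw [aeval_kirchhoff_disjUnion, h, aeval_zero_kirchhoff h₁, zero_mul] at ht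
  exact ht rfl

theorem comp_disjUnionEdgeInr_ne_zero [CommRing R] (h₂ : ¬G₂.IsAcyclic)
    {t : (G₁.disjUnion G₂).edgeSet → R} (ht : aeval t (G₁.disjUnion G₂).kirchhoff ≠ 0) :
    t ∘ G₁.disjUnionEdgeInr G₂ ≠ 0 := by
  intro h
  rw [aeval_kirchhoff_disjUnion, h, aeval_zero_kirchhoff h₂, mul_zero] at ht
  exact ht rfl

variable {k : Type*} [Field k]

theorem mk_mem_projHypersurfaceComplement_iff {V : Type*} [Fintype V] {G : SimpleGraph V}
    {v : G.edgeSet → k} (hv : v ≠ 0) :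
    Projectivization.mk k v hv ∈ G.projHypersurfaceComplement k ↔ aeval v G.kirchhoff ≠ 0 := by
  obtain ⟨c, hc⟩ := Projectivization.exists_smul_eq_mk_rep k v hv
  rw [projHypersurfaceComplement, Set.mem_ofPred_eq, ← hc, Units.smul_def,
    kirchhoff_isHomogeneous.aeval_smul]
  simp [c.ne_zero]

def disjUnionProjLift (y : G₁.projHypersurfaceComplement k × G₂.projHypersurfaceComplement k)
    (c : kˣ) : (G₁.disjUnion G₂).projHypersurfaceComplement k :=
  ⟨.mk k (disjUnionEdgeElim y.1.1.rep ((c : k) • y.2.1.rep))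
      (disjUnionEdgeElim_ne_zero y.1.1.rep_nonzero _),
    (mk_mem_projHypersurfaceComplement_iff _).2 <| by
      rw [aeval_disjUnionEdgeElim, kirchhoff_isHomogeneous.aeval_smul]
      exact mul_ne_zero y.1.2 (mul_ne_zero (pow_ne_zero _ c.ne_zero) y.2.2)⟩

theorem disjUnionProjLift_injective
    (y : G₁.projHypersurfaceComplement k × G₂.projHypersurfaceComplement k) :
    Function.Injective (disjUnionProjLift y) := by
  intro c c' h
  obtain ⟨u, hu⟩ := (Projectivization.mk_eq_mk_iff ..).1 (congrArg Subtype.val h)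
  have hl := congrArg (· ∘ G₁.disjUnionEdgeInl G₂) hu
  have hr := congrArg (· ∘ G₁.disjUnionEdgeInr G₂) hu
  simp only [Units.smul_def, Pi.smul_comp, disjUnionEdgeElim_comp_inl,
    disjUnionEdgeElim_comp_inr, smul_smul] at hl hr
  have hu1 : (u : k) = 1 := smul_left_injective k y.1.1.rep_nonzero (hl.trans (one_smul k _).symm)
  rw [hu1, one_mul] at hr
  exact Units.ext (smul_left_injective k y.2.1.rep_nonzero hr).symm

variable (h₁ : ¬G₁.IsAcyclic) (h₂ : ¬G₂.IsAcyclic)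

def disjUnionProjRestrict (p : (G₁.disjUnion G₂).projHypersurfaceComplement k) :
    G₁.projHypersurfaceComplement k × G₂.projHypersurfaceComplement k :=
  have hp : aeval p.1.rep (G₁.disjUnion G₂).kirchhoff ≠ 0 := p.2
  (⟨.mk k _ (comp_disjUnionEdgeInl_ne_zero h₁ hp), (mk_mem_projHypersurfaceComplement_iff _).2
      (left_ne_zero_of_mul (aeval_kirchhoff_disjUnion p.1.rep ▸ hp))⟩,
    ⟨.mk k _ (comp_disjUnionEdgeInr_ne_zero h₂ hp), (mk_mem_projHypersurfaceComplement_iff _).2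
      (right_ne_zero_of_mul (aeval_kirchhoff_disjUnion p.1.rep ▸ hp))⟩)

theorem disjUnionProjRestrict_eq_iff {p : (G₁.disjUnion G₂).projHypersurfaceComplement k}
    {y : G₁.projHypersurfaceComplement k × G₂.projHypersurfaceComplement k} :
    disjUnionProjRestrict h₁ h₂ p = y ↔
      (∃ u : kˣ, u • y.1.1.rep = p.1.rep ∘ G₁.disjUnionEdgeInl G₂) ∧
        ∃ u : kˣ, u • y.2.1.rep = p.1.rep ∘ G₁.disjUnionEdgeInr G₂ := by
  simp only [Prod.ext_iff, Subtype.ext_iff, disjUnionProjRestrict, Projectivization.mk_eq_iff]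

theorem disjUnionProjRestrict_lift
    (y : G₁.projHypersurfaceComplement k × G₂.projHypersurfaceComplement k) (c : kˣ) :
    disjUnionProjRestrict h₁ h₂ (disjUnionProjLift y c) = y := by
  set g := disjUnionEdgeElim y.1.1.rep ((c : k) • y.2.1.rep)
  obtain ⟨μ, hμ⟩ := Projectivization.exists_smul_eq_mk_rep k g
    (disjUnionEdgeElim_ne_zero y.1.1.rep_nonzero _)
  refine (disjUnionProjRestrict_eq_iff h₁ h₂).2 ⟨⟨μ, ?_⟩, ⟨μ * c, ?_⟩⟩ <;>
    simp [disjUnionProjLift, ← hμ, g, Units.smul_def, Pi.smul_comp, smul_smul]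

theorem exists_disjUnionProjLift_eq {p : (G₁.disjUnion G₂).projHypersurfaceComplement k}
    {y : G₁.projHypersurfaceComplement k × G₂.projHypersurfaceComplement k}
    (hp : disjUnionProjRestrict h₁ h₂ p = y) : ∃ c, disjUnionProjLift y c = p := by
  obtain ⟨⟨u₁, hu₁⟩, ⟨u₂, hu₂⟩⟩ := (disjUnionProjRestrict_eq_iff h₁ h₂).1 hp
  refine ⟨u₁⁻¹ * u₂, Subtype.ext ((Projectivization.mk_eq_iff _).2 ⟨u₁⁻¹, ?_⟩)⟩
  rw [← disjUnionEdgeElim_comp_inl_comp_inr p.1.rep, ← hu₁, ← hu₂, smul_disjUnionEdgeElim]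
  simp [Units.smul_def, smul_smul]

def disjUnionProjRestrictFiberEquiv
    (y : G₁.projHypersurfaceComplement k × G₂.projHypersurfaceComplement k) :
    disjUnionProjRestrict h₁ h₂ ⁻¹' {y} ≃ kˣ :=
  (Equiv.ofBijective (fun c ↦ ⟨disjUnionProjLift y c, disjUnionProjRestrict_lift h₁ h₂ y c⟩)
    ⟨fun _ _ h ↦ disjUnionProjLift_injective y (congrArg Subtype.val h), fun ⟨_, hp⟩ ↦
      (exists_disjUnionProjLift_eq h₁ h₂ hp).imp fun _ hc ↦ Subtype.ext hc⟩).symm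

end Projective

end SimpleGraph

/-- Let `G = G₁ ⊔ G₂` with neither `G₁` nor `G₂` acyclic. (a) For every
`t` with `Ψ_G(t) ≠ 0`, the two components `t₁ = t ∘ inl`, `t₂ = t ∘ inr` are nonzero, so
`[t] ↦ ([t₁], [t₂])` defines a map `ℙ(k^{E(G)}) ∖ X_G → (ℙ(k^{E(G₁)}) ∖ X_{G₁}) ×
(ℙ(k^{E(G₂)}) ∖ X_{G₂})`; (b) this map is surjective and each fiber is in bijection
with `kˣ`. -/
theorem projective_complement_disjUnion_torus_bundle {V₁ V₂ : Type*}
    [Fintype V₁] [Fintype V₂] (G₁ : SimpleGraph V₁) (G₂ : SimpleGraph V₂)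
    (h₁ : ¬ G₁.IsAcyclic) (h₂ : ¬ G₂.IsAcyclic) (k : Type*) [Field k] :
    (∀ t : (G₁.disjUnion G₂).edgeSet → k,
        (MvPolynomial.aeval t) (G₁.disjUnion G₂).kirchhoff ≠ 0 →
          t ∘ G₁.disjUnionEdgeInl G₂ ≠ 0 ∧ t ∘ G₁.disjUnionEdgeInr G₂ ≠ 0) ∧
    ∃ φ : ((G₁.disjUnion G₂).projHypersurfaceComplement k) →
          (G₁.projHypersurfaceComplement k) × (G₂.projHypersurfaceComplement k),
      (∀ p, ∃ c₁ c₂ : kˣ,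
          (↑((φ p).1) : Projectivization k (G₁.edgeSet → k)).rep =
            (c₁ : k) • ((↑p : Projectivization k ((G₁.disjUnion G₂).edgeSet → k)).rep ∘
              G₁.disjUnionEdgeInl G₂) ∧
          (↑((φ p).2) : Projectivization k (G₂.edgeSet → k)).rep =
            (c₂ : k) • ((↑p : Projectivization k ((G₁.disjUnion G₂).edgeSet → k)).rep ∘
              G₁.disjUnionEdgeInr G₂)) ∧
      Function.Surjective φ ∧
      ∀ y, Nonempty ((φ ⁻¹' {y}) ≃ kˣ) := by
  refine ⟨fun t ht ↦ ⟨SimpleGraph.comp_disjUnionEdgeInl_ne_zero h₁ ht,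
      SimpleGraph.comp_disjUnionEdgeInr_ne_zero h₂ ht⟩,
    SimpleGraph.disjUnionProjRestrict h₁ h₂, fun p ↦ ?_, fun y ↦ ?_,
    fun y ↦ ⟨SimpleGraph.disjUnionProjRestrictFiberEquiv h₁ h₂ y⟩⟩
  · obtain ⟨c₁, hc₁⟩ := Projectivization.exists_smul_eq_mk_rep k _
      (SimpleGraph.comp_disjUnionEdgeInl_ne_zero h₁ p.2)
    obtain ⟨c₂, hc₂⟩ := Projectivization.exists_smul_eq_mk_rep k _
      (SimpleGraph.comp_disjUnionEdgeInr_ne_zero h₂ p.2)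
    exact ⟨c₁, c₂, hc₁.symm, hc₂.symm⟩
  · exact ⟨_, ((SimpleGraph.disjUnionProjRestrictFiberEquiv h₁ h₂ y).symm 1).2⟩
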